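/- Let p be an irreducible stochastic matrix on a finite state space X with stationary distribution ρ. For r ∈ X, the reduced matrix _r p on X \ {r} given by _r p_{ij} = p_{ij} + p_{ir} p_{rj}/(1 - p_{rr}) has stationary distribution _r ρ_i = ρ_i / (Σ_{j ≠ r} ρ_j), i.e., the restriction of ρ to X \ {r}, renormalized. -/

import Mathlib

/-!
For `j ≠ r`, stationarity gives `∑_{i ≠ r} ρ i * p i j = ρ j - ρ r * p r j`, and at `r` it gives
`∑_{i ≠ r} ρ i * p i r = ρ r * (1 - p r r)`. The correction term of the reduced matrix thus
contributes `ρ r * (1 - p r r) * p r j / (1 - p r r) = ρ r * p r j`, exactly the missing mass;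
renormalizing is linear.
-/

/-- Irreducibility of a stochastic matrix on a finite state space. -/
def MatIrreducible {X : Type*} [Fintype X] [DecidableEq X] (p : Matrix X X ℝ) : Prop :=
  ∀ i j : X, ∃ n : ℕ, 0 < n ∧ 0 < (p ^ n) i j

open Finset

section

variable {X K : Type*} [Fintype X] [DecidableEq X]

def reducedMatrix [Field K] (p : X → X → K) (r : X) (i j : {i : X // i ≠ r}) : K :=
  p i j + p i r * p r j / (1 - p r r)

theorem sum_subtype_ne_mul_of_stationary [Ring K] {p : X → X → K} {ρ : X → K}
    (hstat : ∀ j, ∑ i, ρ i * p i j = ρ j) (r j : X) :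
    ∑ i : {i // i ≠ r}, ρ i * p i j = ρ j - ρ r * p r j := by
  rw [eq_sub_iff_add_eq', ← Fintype.sum_eq_add_sum_subtype_ne (fun i => ρ i * p i j), hstat]

theorem sum_mul_reducedMatrix_of_stationary [Field K] {p : X → X → K} {ρ : X → K}
    (hstat : ∀ j, ∑ i, ρ i * p i j = ρ j) {r : X} (hr : p r r ≠ 1) (j : {i // i ≠ r}) :
    ∑ i : {i // i ≠ r}, ρ i * reducedMatrix p r i j = ρ j := by
  have hr' : 1 - p r r ≠ 0 := sub_ne_zero.2 hr.symm
  calc ∑ i : {i // i ≠ r}, ρ i * reducedMatrix p r i j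
      = ∑ i : {i // i ≠ r}, ρ i * p i j
          + (∑ i : {i // i ≠ r}, ρ i * p i r) * (p r j / (1 - p r r)) := by
        rw [sum_mul, ← sum_add_distrib]
        exact sum_congr rfl fun i _ => by unfold reducedMatrix; ring
    _ = (ρ j - ρ r * p r j) + (ρ r - ρ r * p r r) * (p r j / (1 - p r r)) := by
        rw [sum_subtype_ne_mul_of_stationary hstat, sum_subtype_ne_mul_of_stationary hstat]
    _ = ρ j := by field_simp; ring

theorem sum_div_mul_of_sum_mul_eq {ι : Type*} [Fintype ι] [Field K] {q : ι → ι → K}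
    {ρ : ι → K} (c : K) (j : ι) (h : ∑ i, ρ i * q i j = ρ j) :
    ∑ i, ρ i / c * q i j = ρ j / c := by
  simp only [div_mul_eq_mul_div, ← sum_div, h]

end

theorem reduced_matrix_stationary_general {X : Type*} [Fintype X] [DecidableEq X]
    (hcard : 2 ≤ Fintype.card X)
    (p : X → X → ℝ) (r : X) (hr : p r r < 1)
    (ρ : X → ℝ) (hρpos : ∀ i, 0 < ρ i)
    (hstat : ∀ j, ∑ i, ρ i * p i j = ρ j) :
    (∑ j : {i : X // i ≠ r}, ρ j.1 / (∑ j' : {i : X // i ≠ r}, ρ j'.1) = 1) ∧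
    ∀ j : {i : X // i ≠ r},
      ∑ i : {i : X // i ≠ r},
        (ρ i.1 / (∑ j' : {i : X // i ≠ r}, ρ j'.1)) *
          (p i.1 j.1 + p i.1 r * p r j.1 / (1 - p r r))
        = ρ j.1 / (∑ j' : {i : X // i ≠ r}, ρ j'.1) := by
  have hmass : ∑ j' : {i : X // i ≠ r}, ρ j'.1 ≠ 0 := by
    obtain ⟨a, ha⟩ := Fintype.exists_ne_of_one_lt_card hcard r
    exact (sum_pos (fun i _ => hρpos i.1) ⟨⟨a, ha⟩, mem_univ _⟩).ne'
  refine ⟨by rw [← sum_div, div_self hmass], fun j => ?_⟩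
  exact sum_div_mul_of_sum_mul_eq _ j (sum_mul_reducedMatrix_of_stationary hstat hr.ne j)

/-- The stationary distribution of the reduced matrix
`_r p_{ij} = p_{ij} + p_{ir} p_{rj}/(1 - p_{rr})` on `X \ {r}` is the restriction of
the stationary distribution `ρ` of `p` to `X \ {r}`, renormalized. -/
theorem reduced_matrix_stationary {X : Type*} [Fintype X] [DecidableEq X]
    (hcard : 2 ≤ Fintype.card X)
    (p : X → X → ℝ) (hnn : ∀ i j, 0 ≤ p i j) (hrow : ∀ i, ∑ j, p i j = 1)
    (hirr : MatIrreducible (Matrix.of p)) (r : X) (hr : p r r < 1)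
    (ρ : X → ℝ) (hρpos : ∀ i, 0 < ρ i) (hρsum : ∑ i, ρ i = 1)
    (hstat : ∀ j, ∑ i, ρ i * p i j = ρ j) :
    (∑ j : {i : X // i ≠ r}, ρ j.1 / (∑ j' : {i : X // i ≠ r}, ρ j'.1) = 1) ∧
    ∀ j : {i : X // i ≠ r},
      ∑ i : {i : X // i ≠ r},
        (ρ i.1 / (∑ j' : {i : X // i ≠ r}, ρ j'.1)) *
          (p i.1 j.1 + p i.1 r * p r j.1 / (1 - p r r))
        = ρ j.1 / (∑ j' : {i : X // i ≠ r}, ρ j'.1) :=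
  reduced_matrix_stationary_general hcard p r hr ρ hρpos hstat
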